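/- arXiv:1401.8055 — 2 statements merged into one kernel-verified Lean document; each statement's English description precedes it below -/
import Mathlib

section
/- Let X, Y be Hilbert spaces, K : X → Y compact with dense range, and v ∈ Y. For α > 0 set x_α = (αI + K*K)^{-1} K* v. Then K x_α → P v as α → 0⁺, where P is the orthogonal projection onto the closure of the range of K; in particular if the range of K is dense then K x_α → v in Y. -/
/-!
Write `T α = K R_α K*`. Pairing `α x + K* K x = z` with `x` gives the energy identity
`α ‖x‖² + ‖K x‖² = Re ⟪z, x⟫`, from which `‖T α‖ ≤ 1` and, on the range of `K`,
`‖T α (K u) - K u‖ = α ‖K (R_α u)‖ ≤ √α ‖u‖`. A uniformly bounded family of operators that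
converges to the identity on a dense set converges to it everywhere.
-/

open Filter Topology RCLike ContinuousLinearMap
open scoped InnerProductSpace InnerProduct

theorem ContinuousLinearMap.tendsto_apply_of_dense {ι 𝕜 E F : Type*} [NontriviallyNormedField 𝕜]
    [SeminormedAddCommGroup E] [NormedSpace 𝕜 E] [SeminormedAddCommGroup F] [NormedSpace 𝕜 F]
    {l : Filter ι} {T : ι → E →L[𝕜] F} {f : E →L[𝕜] F} {C : ℝ} (hT : ∀ᶠ i in l, ‖T i‖ ≤ C)
    {s : Set E} (hs : Dense s) (hconv : ∀ y ∈ s, Tendsto (fun i ↦ T i y) l (𝓝 (f y))) (x : E) :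
    Tendsto (fun i ↦ T i x) l (𝓝 (f x)) := by
  classical
  -- Replacing the maps outside the bound by `0` gives an equicontinuous family that agrees
  -- with `T` eventually along `l`.
  let S : ι → E →L[𝕜] F := fun i ↦ if ‖T i‖ ≤ C then T i else 0
  have hS : Equicontinuous ((↑) ∘ S) := by
    refine ((NormedSpace.equicontinuous_TFAE S).out 5 1).mp ?_
    refine ⟨max C 0, fun i ↦ ?_⟩
    by_cases hi : ‖T i‖ ≤ C <;> simp [S, hi]
  have hST : ∀ y, (fun i ↦ S i y) =ᶠ[l] fun i ↦ T i y := fun y ↦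
    hT.mono fun i hi ↦ by simp only [S, if_pos hi]
  have hclosed := hS.isClosed_setOfPred_tendsto (l := l) f.continuous
  have hx : x ∈ {y | Tendsto (fun i ↦ S i y) l (𝓝 (f y))} :=
    hclosed.closure_subset_iff.mpr (fun y hy ↦ (hconv y hy).congr' (hST y).symm) (hs x)
  exact hx.congr' (hST x)

section Tikhonov

variable {𝕜 X Y : Type*} [RCLike 𝕜] [NormedAddCommGroup X] [InnerProductSpace 𝕜 X]
  [CompleteSpace X] [NormedAddCommGroup Y] [InnerProductSpace 𝕜 Y] [CompleteSpace Y]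
  (K : X →L[𝕜] Y) {α : ℝ} {x z : X}

theorem re_inner_eq_of_tikhonov_eq (hx : (α : 𝕜) • x + (K†) (K x) = z) :
    α * ‖x‖ ^ 2 + ‖K x‖ ^ 2 = re ⟪z, x⟫_𝕜 := by
  subst hx
  simp only [inner_add_left, inner_smul_left, adjoint_inner_left, map_add, conj_ofReal,
    re_ofReal_mul, inner_self_eq_norm_sq]

theorem norm_apply_le_of_tikhonov_eq_adjoint (hα : 0 ≤ α) {w : Y}
    (hx : (α : 𝕜) • x + (K†) (K x) = (K†) w) : ‖K x‖ ≤ ‖w‖ := by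
  have henergy := re_inner_eq_of_tikhonov_eq K hx
  rw [adjoint_inner_left] at henergy
  have hcs := re_inner_le_norm (𝕜 := 𝕜) w (K x)
  nlinarith [sq_nonneg ‖x‖, norm_nonneg (K x), norm_nonneg w]

theorem mul_sq_norm_apply_le_of_tikhonov_eq (hα : 0 ≤ α) (hx : (α : 𝕜) • x + (K†) (K x) = z) :
    α * ‖K x‖ ^ 2 ≤ ‖z‖ ^ 2 := by
  have henergy := re_inner_eq_of_tikhonov_eq K hx
  have hcs := re_inner_le_norm (𝕜 := 𝕜) z x
  nlinarith [sq_nonneg (‖z‖ - α * ‖x‖), mul_nonneg hα (sq_nonneg ‖x‖), sq_nonneg ‖K x‖,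
    mul_le_mul_of_nonneg_left hcs hα]

theorem sqrt_mul_norm_apply_le_of_tikhonov_eq (hα : 0 ≤ α) (hx : (α : 𝕜) • x + (K†) (K x) = z) :
    √α * ‖K x‖ ≤ ‖z‖ := by
  refine (pow_le_pow_iff_left₀ (by positivity) (norm_nonneg z) two_ne_zero).mp ?_
  rw [mul_pow, Real.sq_sqrt hα]
  exact mul_sq_norm_apply_le_of_tikhonov_eq K hα hx

variable (α) in
noncomputable def tikhonovOp : X →L[𝕜] X := (α : 𝕜) • ContinuousLinearMap.id 𝕜 X + (K†).comp K

variable {K} {R : X →L[𝕜] X}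

theorem tikhonovOp_apply_of_rightInverse (hR : (tikhonovOp K α).comp R = .id 𝕜 X) (z : X) :
    (α : 𝕜) • R z + (K†) (K (R z)) = z := by
  simpa [tikhonovOp] using DFunLike.congr_fun hR z

theorem norm_regularized_le_one (hα : 0 ≤ α) (hR : (tikhonovOp K α).comp R = .id 𝕜 X) :
    ‖K.comp (R.comp (K†))‖ ≤ 1 :=
  opNorm_le_bound _ zero_le_one fun w ↦ by
    simpa using norm_apply_le_of_tikhonov_eq_adjoint K hα (tikhonovOp_apply_of_rightInverse hR _)

theorem norm_regularized_apply_sub_le (hα : 0 ≤ α) (hR : (tikhonovOp K α).comp R = .id 𝕜 X)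
    (hL : R.comp (tikhonovOp K α) = .id 𝕜 X) (u : X) :
    ‖K (R ((K†) (K u))) - K u‖ ≤ √α * ‖u‖ := by
  have hleft : (α : 𝕜) • R u + R ((K†) (K u)) = u := by
    simpa [tikhonovOp] using DFunLike.congr_fun hL u
  have hdiff : K (R ((K†) (K u))) - K u = -((α : 𝕜) • K (R u)) := by
    have hKleft := congrArg K hleft
    rw [map_add, map_smul] at hKleft
    rw [eq_neg_iff_add_eq_zero, sub_add_eq_add_sub, sub_eq_zero, add_comm, hKleft]
  calc ‖K (R ((K†) (K u))) - K u‖ = √α * (√α * ‖K (R u)‖) := by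
        rw [hdiff, norm_neg, norm_smul, norm_ofReal, abs_of_nonneg hα, ← mul_assoc,
          Real.mul_self_sqrt hα]
    _ ≤ √α * ‖u‖ := by
        gcongr
        exact sqrt_mul_norm_apply_le_of_tikhonov_eq K hα (tikhonovOp_apply_of_rightInverse hR u)

theorem tendsto_regularized_apply_range {R : ℝ → X →L[𝕜] X}
    (hR : ∀ α : ℝ, 0 < α →
      (tikhonovOp K α).comp (R α) = .id 𝕜 X ∧ (R α).comp (tikhonovOp K α) = .id 𝕜 X) (u : X) :
    Tendsto (fun α ↦ K (R α ((K†) (K u)))) (𝓝[>] 0) (𝓝 (K u)) := by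
  rw [tendsto_iff_norm_sub_tendsto_zero]
  have hsqrt : Tendsto (fun α ↦ √α * ‖u‖) (𝓝[>] 0) (𝓝 0) := by
    simpa using ((Real.continuous_sqrt.tendsto 0).mono_left nhdsWithin_le_nhds).mul_const ‖u‖
  refine squeeze_zero' (.of_forall fun _ ↦ norm_nonneg _) ?_ hsqrt
  filter_upwards [self_mem_nhdsWithin] with α (hα : 0 < α)
  exact norm_regularized_apply_sub_le hα.le (hR α hα).1 (hR α hα).2 u

end Tikhonov

theorem tikhonov_convergence_general
    {X Y : Type*} [NormedAddCommGroup X] [InnerProductSpace ℂ X] [CompleteSpace X]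
    [NormedAddCommGroup Y] [InnerProductSpace ℂ Y] [CompleteSpace Y]
    (K : X →L[ℂ] Y) (hdense : Dense (Set.range K))
    (v : Y) (R : ℝ → X →L[ℂ] X)
    (hR : ∀ α : ℝ, 0 < α →
      ((α : ℂ) • ContinuousLinearMap.id ℂ X
          + (ContinuousLinearMap.adjoint K).comp K).comp (R α) = ContinuousLinearMap.id ℂ X ∧
      (R α).comp ((α : ℂ) • ContinuousLinearMap.id ℂ X
          + (ContinuousLinearMap.adjoint K).comp K) = ContinuousLinearMap.id ℂ X) :
    Filter.Tendsto (fun α : ℝ => K (R α (ContinuousLinearMap.adjoint K v)))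
      (nhdsWithin 0 (Set.Ioi 0)) (nhds v) := by
  have hbound : ∀ᶠ α in 𝓝[>] 0, ‖K.comp ((R α).comp (K†))‖ ≤ 1 := by
    filter_upwards [self_mem_nhdsWithin] with α (hα : 0 < α)
    exact norm_regularized_le_one hα.le (hR α hα).1
  have hrange : ∀ y ∈ Set.range K, Tendsto (fun α ↦ K.comp ((R α).comp (K†)) y) (𝓝[>] 0)
      (𝓝 (ContinuousLinearMap.id ℂ Y y)) := by
    rintro _ ⟨u, rfl⟩
    exact tendsto_regularized_apply_range hR u
  exact tendsto_apply_of_dense hbound hdense hrange v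

/-- Tikhonov regularization: if `K` is a compact bounded operator with dense range,
`R α` is the inverse of `α I + K* K` for `α > 0`, and `x_α = R α (K* v)`, then
`K x_α → v` as `α → 0⁺` (since the range is dense, the orthogonal projection of `v`
onto the closure of the range of `K` is `v` itself). -/
theorem tikhonov_convergence
    {X Y : Type*} [NormedAddCommGroup X] [InnerProductSpace ℂ X] [CompleteSpace X]
    [NormedAddCommGroup Y] [InnerProductSpace ℂ Y] [CompleteSpace Y]
    (K : X →L[ℂ] Y) (hK : IsCompactOperator K) (hdense : Dense (Set.range K))
    (v : Y) (R : ℝ → X →L[ℂ] X)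
    (hR : ∀ α : ℝ, 0 < α →
      ((α : ℂ) • ContinuousLinearMap.id ℂ X
          + (ContinuousLinearMap.adjoint K).comp K).comp (R α) = ContinuousLinearMap.id ℂ X ∧
      (R α).comp ((α : ℂ) • ContinuousLinearMap.id ℂ X
          + (ContinuousLinearMap.adjoint K).comp K) = ContinuousLinearMap.id ℂ X) :
    Filter.Tendsto (fun α : ℝ => K (R α (ContinuousLinearMap.adjoint K v)))
      (nhdsWithin 0 (Set.Ioi 0)) (nhds v) :=
  tikhonov_convergence_general K hdense v R hR
end

section
/- Let X, Y be Hilbert spaces, K : X → Y compact and injective with dense range, v ∈ Y, and α_n → 0⁺. Define v_n = (α_n I + K*K)^{-1} K* v and u_n = K v_n. Then for every ε > 0 there exists N such that for all n > N, ‖u_n − v‖_Y ≤ ε. -/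
/-!
If `(a I + K*K) w = K* v` with `a ≥ 0`, then `w` minimises the Tikhonov functional
`‖K x - v‖² + a ‖x‖²`. Comparing with a fixed `x` for which `K x` is close to `v` (dense range)
gives `‖K wₙ - v‖² ≤ ‖K x - v‖² + αₙ ‖x‖²`, whose right-hand side tends to `‖K x - v‖²`.
-/

open Filter Topology ContinuousLinearMap

section Tikhonov

variable {𝕜 X Y : Type*} [RCLike 𝕜]
  [NormedAddCommGroup X] [InnerProductSpace 𝕜 X] [CompleteSpace X]
  [NormedAddCommGroup Y] [InnerProductSpace 𝕜 Y] [CompleteSpace Y]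

theorem tikhonov_functional_le_of_normal_eq (K : X →L[𝕜] Y) (v : Y) {a : ℝ} (ha : 0 ≤ a)
    {w : X} (hw : (a : 𝕜) • w + adjoint K (K w) = adjoint K v) (x : X) :
    ‖K w - v‖ ^ 2 + a * ‖w‖ ^ 2 ≤ ‖K x - v‖ ^ 2 + a * ‖x‖ ^ 2 := by
  set d := x - w
  have hx : x = w + d := by simp [d]
  have hKx : K x - v = (K w - v) + K d := by rw [hx, map_add]; abel
  -- The normal equation says `K* (K w - v) = -a w`, so the cross terms of the two expansions cancel.
  have hadj : adjoint K (K w - v) = -((a : 𝕜) • w) := by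
    rw [map_sub, ← hw]; abel
  have hcross : RCLike.re (inner 𝕜 (K w - v) (K d)) = -(a * RCLike.re (inner 𝕜 w d)) := by
    rw [← adjoint_inner_left, hadj, inner_neg_left, inner_smul_left, RCLike.conj_ofReal,
      map_neg, RCLike.re_ofReal_mul]
  have hres : ‖K x - v‖ ^ 2
      = ‖K w - v‖ ^ 2 + 2 * RCLike.re (inner 𝕜 (K w - v) (K d)) + ‖K d‖ ^ 2 := by
    rw [hKx]; exact norm_add_sq _ _
  have hnorm : ‖x‖ ^ 2 = ‖w‖ ^ 2 + 2 * RCLike.re (inner 𝕜 w d) + ‖d‖ ^ 2 := by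
    rw [hx]; exact norm_add_sq _ _
  have had : 0 ≤ a * ‖d‖ ^ 2 := by positivity
  nlinarith [sq_nonneg ‖K d‖]

theorem tendsto_norm_tikhonov_residual {ι : Type*} {l : Filter ι} (K : X →L[𝕜] Y) {v : Y}
    (hv : v ∈ closure (Set.range K)) {α : ι → ℝ} (hα_nonneg : ∀ i, 0 ≤ α i)
    (hα : Tendsto α l (𝓝 0)) {w : ι → X}
    (hw : ∀ i, (α i : 𝕜) • w i + adjoint K (K (w i)) = adjoint K v) :
    Tendsto (fun i => ‖K (w i) - v‖) l (𝓝 0) := by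
  refine (Metric.tendsto_nhds.2 fun ε hε => ?_)
  obtain ⟨_, ⟨x, rfl⟩, hx⟩ := Metric.mem_closure_iff.1 hv ε hε
  have hx : ‖K x - v‖ ^ 2 < ε ^ 2 := by
    rw [← dist_eq_norm, dist_comm]
    exact pow_lt_pow_left₀ hx dist_nonneg two_ne_zero
  have hbound : Tendsto (fun i => ‖K x - v‖ ^ 2 + α i * ‖x‖ ^ 2) l (𝓝 (‖K x - v‖ ^ 2)) := by
    simpa using tendsto_const_nhds.add (hα.mul_const (‖x‖ ^ 2))
  filter_upwards [hbound.eventually_lt_const hx] with i hi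
  have hmin := tikhonov_functional_le_of_normal_eq K v (hα_nonneg i) (hw i) x
  have hres : ‖K (w i) - v‖ ^ 2 < ε ^ 2 := by nlinarith [hα_nonneg i, sq_nonneg ‖w i‖]
  rw [Real.dist_0_eq_abs, abs_norm]
  exact lt_of_pow_lt_pow_left₀ 2 hε.le hres

end Tikhonov

theorem tikhonov_sequence_convergence_general
    {X Y : Type*} [NormedAddCommGroup X] [InnerProductSpace ℂ X] [CompleteSpace X]
    [NormedAddCommGroup Y] [InnerProductSpace ℂ Y] [CompleteSpace Y]
    (K : X →L[ℂ] Y)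
    (hdense : Dense (Set.range K)) (v : Y)
    (α : ℕ → ℝ) (hαpos : ∀ n, 0 < α n)
    (hα : Filter.Tendsto α Filter.atTop (nhds 0))
    (R : ℕ → X →L[ℂ] X)
    (hR : ∀ n : ℕ,
      (((α n : ℂ) • ContinuousLinearMap.id ℂ X
          + (ContinuousLinearMap.adjoint K).comp K).comp (R n) = ContinuousLinearMap.id ℂ X ∧
       (R n).comp ((α n : ℂ) • ContinuousLinearMap.id ℂ X
          + (ContinuousLinearMap.adjoint K).comp K) = ContinuousLinearMap.id ℂ X)) :
    ∀ ε > (0 : ℝ), ∃ N : ℕ, ∀ n > N,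
      ‖K (R n (ContinuousLinearMap.adjoint K v)) - v‖ ≤ ε := by
  intro ε hε
  have hnormal : ∀ n, (α n : ℂ) • R n (adjoint K v) + adjoint K (K (R n (adjoint K v)))
      = adjoint K v := fun n => by
    simpa using congrArg (fun T : X →L[ℂ] X => T (adjoint K v)) (hR n).1
  have hres := tendsto_norm_tikhonov_residual K (hdense.closure_eq ▸ Set.mem_univ v)
    (fun n => (hαpos n).le) hα hnormal
  obtain ⟨N, hN⟩ := eventually_atTop.1 (hres.eventually (ge_mem_nhds hε))
  exact ⟨N, fun n hn => hN n hn.le⟩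

/-- Tikhonov regularization sequence: if `K` is compact, injective, with dense range,
`α_n → 0⁺`, `R n` is the inverse of `α_n I + K*K`, `v_n = R n (K* v)` and
`u_n = K v_n`, then `‖u_n − v‖ → 0`. -/
theorem tikhonov_sequence_convergence
    {X Y : Type*} [NormedAddCommGroup X] [InnerProductSpace ℂ X] [CompleteSpace X]
    [NormedAddCommGroup Y] [InnerProductSpace ℂ Y] [CompleteSpace Y]
    (K : X →L[ℂ] Y) (hK : IsCompactOperator K) (hinj : Function.Injective K)
    (hdense : Dense (Set.range K)) (v : Y)
    (α : ℕ → ℝ) (hαpos : ∀ n, 0 < α n)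
    (hα : Filter.Tendsto α Filter.atTop (nhds 0))
    (R : ℕ → X →L[ℂ] X)
    (hR : ∀ n : ℕ,
      (((α n : ℂ) • ContinuousLinearMap.id ℂ X
          + (ContinuousLinearMap.adjoint K).comp K).comp (R n) = ContinuousLinearMap.id ℂ X ∧
       (R n).comp ((α n : ℂ) • ContinuousLinearMap.id ℂ X
          + (ContinuousLinearMap.adjoint K).comp K) = ContinuousLinearMap.id ℂ X)) :
    ∀ ε > (0 : ℝ), ∃ N : ℕ, ∀ n > N,
      ‖K (R n (ContinuousLinearMap.adjoint K v)) - v‖ ≤ ε :=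
  tikhonov_sequence_convergence_general K hdense v α hαpos hα R hR
end
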